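/- arXiv:1412.3773 — 4 statements merged into one kernel-verified Lean document; each statement's English description precedes it below -/
import Mathlib

section
/- Suppose Y = αX + E_Y where X ~ N(μ_X, σ_X²), E_Y ~ N(μ_{E_Y}, σ_{E_Y}²), X and E_Y are independent, and α ∈ ℝ. Define β = α σ_X² / (α² σ_X² + σ_{E_Y}²), μ_Y = α μ_X + μ_{E_Y}, σ_Y² = α² σ_X² + σ_{E_Y}², μ_{E_X} = (1 − αβ) μ_X − β μ_{E_Y}, σ_{E_X}² = (1 − αβ)² σ_X² + β² σ_{E_Y}². Then the model X = βY + E_X with Y ~ N(μ_Y, σ_Y²), E_X ~ N(μ_{E_X}, σ_{E_X}²), and E_X independent of Y, induces the same joint distribution of (X,Y). -/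
/-!
A probability law on `ℝ × ℝ` is determined by its images under the linear functionals
`(x, y) ↦ a x + b y`, since its characteristic function only sees these. In both models such an
image is a linear combination of two independent Gaussians, hence the Gaussian with mean
`(a + bα) μ_X + b μ_{E_Y}`, resp. `a μ_{E_X} + (aβ + b) μ_Y`, and variance
`(a + bα)² σ_X² + b² σ_{E_Y}²`, resp. `a² σ_{E_X}² + (aβ + b)² σ_Y²`. The means agree identically,
and the variances agree because `β σ_Y² = α σ_X²`.
-/

open MeasureTheory ProbabilityTheory
open scoped NNReal

theorem MeasureTheory.Measure.ext_of_map_strongDual {E : Type*} [NormedAddCommGroup E]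
    [NormedSpace ℝ E] [CompleteSpace E] [SecondCountableTopology E] [MeasurableSpace E]
    [BorelSpace E] {μ ν : Measure E} [IsFiniteMeasure μ] [IsFiniteMeasure ν]
    (h : ∀ L : StrongDual ℝ E, μ.map L = ν.map L) : μ = ν :=
  Measure.ext_of_charFunDual <| funext fun L => by
    rw [charFunDual_eq_charFun_map_one, charFunDual_eq_charFun_map_one, h]

theorem StrongDual.apply_real_prod (L : StrongDual ℝ (ℝ × ℝ)) (z : ℝ × ℝ) :
    L z = L (1, 0) * z.1 + L (0, 1) * z.2 := by
  conv_lhs =>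
    rw [show z = z.1 • ((1 : ℝ), (0 : ℝ)) + z.2 • ((0 : ℝ), (1 : ℝ)) by ext <;> simp]
  rw [map_add, map_smul, map_smul, smul_eq_mul, smul_eq_mul, mul_comm, mul_comm z.2]

theorem map_strongDual_map_prodMk {Ω : Type*} [MeasurableSpace Ω] (P : Measure Ω)
    {X Y : Ω → ℝ} (hX : Measurable X) (hY : Measurable Y) (L : StrongDual ℝ (ℝ × ℝ)) :
    (P.map fun ω => (X ω, Y ω)).map L = P.map fun ω => L (1, 0) * X ω + L (0, 1) * Y ω := by
  rw [Measure.map_map L.continuous.measurable (hX.prodMk hY)]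
  exact congrArg (Measure.map · P) (funext fun ω => L.apply_real_prod (X ω, Y ω))

theorem gaussianReal_const_mul_add_const_mul_of_indepFun {Ω : Type*} [MeasurableSpace Ω]
    {P : Measure Ω} {X Y : Ω → ℝ} {m₁ m₂ : ℝ} {v₁ v₂ : ℝ≥0} (hX : Measurable X)
    (hY : Measurable Y) (hXY : IndepFun X Y P) (hX_law : P.map X = gaussianReal m₁ v₁)
    (hY_law : P.map Y = gaussianReal m₂ v₂) (a b : ℝ) :
    P.map (fun ω => a * X ω + b * Y ω) = gaussianReal (a * m₁ + b * m₂)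
      (.mk (a ^ 2) (sq_nonneg a) * v₁ + .mk (b ^ 2) (sq_nonneg b) * v₂) := by
  have hmul {Z : Ω → ℝ} {m : ℝ} {v : ℝ≥0} (hZ : Measurable Z)
      (hZ_law : P.map Z = gaussianReal m v) (c : ℝ) :
      P.map (fun ω => c * Z ω) = gaussianReal (c * m) (.mk (c ^ 2) (sq_nonneg c) * v) := by
    rw [← gaussianReal_map_const_mul, ← hZ_law, Measure.map_map (measurable_const_mul c) hZ]
    rfl
  exact gaussianReal_add_gaussianReal_of_indepFun
    (hXY.comp (measurable_const_mul a) (measurable_const_mul b))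
    (hmul hX hX_law a) (hmul hY hY_law b)

/-- **Non-identifiability of the linear-Gaussian additive noise model.**
Suppose `Y = αX + E_Y` with `X ~ N(μ_X, σ_X²)`, `E_Y ~ N(μ_{E_Y}, σ_{E_Y}²)` independent.
With `β = α σ_X² / (α² σ_X² + σ_{E_Y}²)`, `μ_Y = α μ_X + μ_{E_Y}`,
`σ_Y² = α² σ_X² + σ_{E_Y}²`, `μ_{E_X} = (1 − αβ) μ_X − β μ_{E_Y}`,
`σ_{E_X}² = (1 − αβ)² σ_X² + β² σ_{E_Y}²`, the backward model `X = βY + E_X` with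
`Y ~ N(μ_Y, σ_Y²)`, `E_X ~ N(μ_{E_X}, σ_{E_X}²)`, `E_X ⟂ Y`, induces the same joint
distribution of `(X,Y)`. -/
theorem linear_gaussian_backward_model_same_joint
    {Ω : Type*} [MeasurableSpace Ω] (P : Measure Ω) [IsProbabilityMeasure P]
    {Ω' : Type*} [MeasurableSpace Ω'] (P' : Measure Ω') [IsProbabilityMeasure P']
    (α : ℝ) (μX μEY : ℝ) (vX vEY : NNReal)
    -- the forward model `Y = α X + E_Y`:
    (X EY : Ω → ℝ) (hX_meas : Measurable X) (hEY_meas : Measurable EY)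
    (hX_law : Measure.map X P = gaussianReal μX vX)
    (hEY_law : Measure.map EY P = gaussianReal μEY vEY)
    (hindep : IndepFun X EY P)
    (Y : Ω → ℝ) (hY : Y = fun ω => α * X ω + EY ω)
    -- the derived parameters:
    (β μY μEX : ℝ) (vY vEX : NNReal)
    (hβ : β = α * (vX : ℝ) / (α ^ 2 * (vX : ℝ) + (vEY : ℝ)))
    (hμY : μY = α * μX + μEY)
    (hvY : (vY : ℝ) = α ^ 2 * (vX : ℝ) + (vEY : ℝ))
    (hμEX : μEX = (1 - α * β) * μX - β * μEY)
    (hvEX : (vEX : ℝ) = (1 - α * β) ^ 2 * (vX : ℝ) + β ^ 2 * (vEY : ℝ))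
    -- the backward model `X' = β Y' + E_X`:
    (Y' EX : Ω' → ℝ) (hY'_meas : Measurable Y') (hEX_meas : Measurable EX)
    (hY'_law : Measure.map Y' P' = gaussianReal μY vY)
    (hEX_law : Measure.map EX P' = gaussianReal μEX vEX)
    (hindep' : IndepFun EX Y' P')
    (X' : Ω' → ℝ) (hX' : X' = fun ω => β * Y' ω + EX ω) :
    Measure.map (fun ω => (X ω, Y ω)) P = Measure.map (fun ω => (X' ω, Y' ω)) P' := by
  -- If `σ_Y² = 0` then `β = 0` by the convention `x / 0 = 0`, but then also `α σ_X² = 0`.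
  have hβvY : β * vY = α * vX := by
    rw [hβ, ← hvY]
    refine div_mul_cancel_of_imp fun hvY0 => (pow_eq_zero_iff two_ne_zero).mp ?_
    nlinarith [mul_nonneg vEY.coe_nonneg vX.coe_nonneg, sq_nonneg (α * vX)]
  subst hY hX'
  refine Measure.ext_of_map_strongDual fun L => ?_
  rw [map_strongDual_map_prodMk P hX_meas (by fun_prop),
    map_strongDual_map_prodMk P' (by fun_prop) hY'_meas]
  set a := L (1, 0)
  set b := L (0, 1)
  have hfwd : (fun ω => a * X ω + b * (α * X ω + EY ω))
      = fun ω => (a + b * α) * X ω + b * EY ω := by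
    funext ω; ring
  have hbwd : (fun ω => a * (β * Y' ω + EX ω) + b * Y' ω)
      = fun ω => a * EX ω + (a * β + b) * Y' ω := by
    funext ω; ring
  rw [hfwd, hbwd,
    gaussianReal_const_mul_add_const_mul_of_indepFun hX_meas hEY_meas hindep hX_law hEY_law,
    gaussianReal_const_mul_add_const_mul_of_indepFun hEX_meas hY'_meas hindep' hEX_law hY'_law]
  congr 1
  · rw [hμEX, hμY]; ring
  · ext
    simp only [NNReal.coe_add, NNReal.coe_mul, NNReal.coe_mk, hvEX]
    linear_combination -(2 * a ^ 2 * β + 2 * a * b) * hβvY + (a ^ 2 * β ^ 2 - b ^ 2) * hvY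
end

section
/- For all N ≥ 2, for all x ∈ 𝒳^N, for all y, y' ∈ ℝ^N, for every bounded kernel k : 𝒳² → ℝ with |k(ξ,ξ')| ≤ C for all ξ, ξ' ∈ 𝒳, and for every bounded kernel l : ℝ² → ℝ that is Lipschitz continuous with constant λ in each argument (i.e., |l(a,b) − l(a,b')| ≤ λ|b − b'| and |l(a,b) − l(a',b)| ≤ λ|a − a'|), the empirical HSIC satisfies |HSIC_b(x,y) − HSIC_b(x,y')| ≤ (32 λ C / √N) · ‖y − y'‖, where ‖·‖ is the Euclidean norm on ℝ^N. -/
open MeasureTheory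

/-- The (biased) empirical HSIC: `HSIC_b(x,y) := (N−1)⁻² tr(K H L H)` with
`K_ij = k(x_i,x_j)`, `L_ij = l(y_i,y_j)` and the centering matrix `H_ij = δ_ij − 1/N`. -/
noncomputable def empHSIC {𝒳 𝒴 : Type*} (k : 𝒳 → 𝒳 → ℝ) (l : 𝒴 → 𝒴 → ℝ)
    {N : ℕ} (x : Fin N → 𝒳) (y : Fin N → 𝒴) : ℝ :=
  let K : Matrix (Fin N) (Fin N) ℝ := Matrix.of fun i j => k (x i) (x j)
  let L : Matrix (Fin N) (Fin N) ℝ := Matrix.of fun i j => l (y i) (y j)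
  let H : Matrix (Fin N) (Fin N) ℝ :=
    Matrix.of fun i j => (if i = j then (1 : ℝ) else 0) - 1 / N
  ((N : ℝ) - 1)⁻¹ ^ 2 * Matrix.trace (K * H * L * H)

/-- **Lipschitz continuity of the empirical HSIC in its second argument** (Lemma 16).
For `N ≥ 2`, samples `x ∈ 𝒳^N`, `y, y' ∈ ℝ^N`, a kernel `k` bounded by `C`, and a bounded
kernel `l` on `ℝ` that is Lipschitz with constant `λ` in each argument,
`|HSIC_b(x,y) − HSIC_b(x,y')| ≤ (32 λ C / √N) ‖y − y'‖` (Euclidean norm on `ℝ^N`). -/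
theorem empHSIC_lipschitz
    {𝒳 : Type*} (N : ℕ) (hN : 2 ≤ N)
    (x : Fin N → 𝒳) (y y' : EuclideanSpace ℝ (Fin N))
    (k : 𝒳 → 𝒳 → ℝ) (C : ℝ) (hk_bdd : ∀ a b, |k a b| ≤ C)
    (l : ℝ → ℝ → ℝ) (D : ℝ) (hl_bdd : ∀ a b, |l a b| ≤ D)
    (lam : ℝ) (hlam : 0 ≤ lam)
    (hl_lip_right : ∀ a b b', |l a b - l a b'| ≤ lam * |b - b'|)
    (hl_lip_left : ∀ a a' b, |l a b - l a' b| ≤ lam * |a - a'|) :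
    |empHSIC k l x (fun i => y i) - empHSIC k l x (fun i => y' i)|
      ≤ 32 * lam * C / Real.sqrt N * ‖y - y'‖ := by
  classical
  have hn : (2:ℝ) ≤ (N:ℝ) := by exact_mod_cast hN
  have hNpos : (0:ℝ) < (N:ℝ) := by linarith
  have hC : 0 ≤ C := (abs_nonneg _).trans (hk_bdd (x ⟨0, by omega⟩) (x ⟨0, by omega⟩))
  set d : Fin N → ℝ := fun i => |y i - y' i| with hd
  set S : ℝ := ∑ i, d i with hS
  have hdnn : ∀ i, 0 ≤ d i := fun i => abs_nonneg _
  have hSnn : 0 ≤ S := Finset.sum_nonneg fun i _ => hdnn i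
  set H : Matrix (Fin N) (Fin N) ℝ :=
    Matrix.of (fun i j => (if i = j then (1 : ℝ) else 0) - 1 / N) with hHdef
  set K : Matrix (Fin N) (Fin N) ℝ := Matrix.of (fun i j => k (x i) (x j)) with hKdef
  set L1 : Matrix (Fin N) (Fin N) ℝ := Matrix.of (fun i j => l (y i) (y j)) with hL1def
  set L2 : Matrix (Fin N) (Fin N) ℝ := Matrix.of (fun i j => l (y' i) (y' j)) with hL2def
  set M : Matrix (Fin N) (Fin N) ℝ := H * K * H with hMdef
  -- entrywise bound on H
  have hHabs : ∀ a b : Fin N, |H a b| ≤ (if a = b then (1:ℝ) else 0) + 1 / N := by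
    intro a b
    have h1 : (0:ℝ) < 1 / N := by positivity
    have h2 : (1:ℝ) / N ≤ 1 := by
      rw [div_le_one hNpos]; linarith
    simp only [hHdef, Matrix.of_apply]
    rcases eq_or_ne a b with h | h
    · simp only [if_pos h]
      rw [abs_of_nonneg (by linarith)]
      linarith
    · simp only [if_neg h]
      rw [abs_of_nonpos (by linarith)]
      linarith
  have hHrow : ∀ a : Fin N, (∑ b, |H a b|) ≤ 2 := by
    intro a
    calc (∑ b, |H a b|) ≤ ∑ b, ((if a = b then (1:ℝ) else 0) + 1 / N) :=
          Finset.sum_le_sum fun b _ => hHabs a b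
      _ = 2 := by
          rw [Finset.sum_add_distrib, Finset.sum_ite_eq Finset.univ a (fun _ => (1:ℝ))]
          simp [Finset.card_univ, mul_comm]
          rw [mul_inv_cancel₀ hNpos.ne']
          norm_num
  have hHcol : ∀ b : Fin N, (∑ a, |H a b|) ≤ 2 := by
    intro b
    calc (∑ a, |H a b|) ≤ ∑ a, ((if a = b then (1:ℝ) else 0) + 1 / N) :=
          Finset.sum_le_sum fun a _ => hHabs a b
      _ = 2 := by
          rw [Finset.sum_add_distrib, Finset.sum_ite_eq' Finset.univ b (fun _ => (1:ℝ))]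
          simp [Finset.card_univ, mul_comm]
          rw [mul_inv_cancel₀ hNpos.ne']
          norm_num
  -- bound on entries of H*K
  have hHK : ∀ b a : Fin N, |(H * K) b a| ≤ 2 * C := by
    intro b a
    calc |(H * K) b a| = |∑ i, H b i * K i a| := by rw [Matrix.mul_apply]
      _ ≤ ∑ i, |H b i * K i a| := Finset.abs_sum_le_sum_abs _ _
      _ = ∑ i, |H b i| * |K i a| := by simp [abs_mul]
      _ ≤ ∑ i, |H b i| * C := by
          refine Finset.sum_le_sum fun i _ => ?_
          exact mul_le_mul_of_nonneg_left (hk_bdd _ _) (abs_nonneg _)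
      _ = (∑ i, |H b i|) * C := by rw [Finset.sum_mul]
      _ ≤ 2 * C := mul_le_mul_of_nonneg_right (hHrow b) hC
  -- bound on entries of M = H*K*H
  have hM4 : ∀ b j : Fin N, |M b j| ≤ 4 * C := by
    intro b j
    calc |M b j| = |∑ a, (H * K) b a * H a j| := by rw [hMdef, Matrix.mul_apply]
      _ ≤ ∑ a, |(H * K) b a * H a j| := Finset.abs_sum_le_sum_abs _ _
      _ = ∑ a, |(H * K) b a| * |H a j| := by simp [abs_mul]
      _ ≤ ∑ a, (2 * C) * |H a j| := by
          refine Finset.sum_le_sum fun a _ => ?_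
          exact mul_le_mul_of_nonneg_right (hHK b a) (abs_nonneg _)
      _ = (2 * C) * ∑ a, |H a j| := by rw [Finset.mul_sum]
      _ ≤ (2 * C) * 2 := mul_le_mul_of_nonneg_left (hHcol j) (by linarith)
      _ = 4 * C := by ring
  -- bound on entries of L1 - L2
  have hΔ : ∀ j b : Fin N, |L1 j b - L2 j b| ≤ lam * (d j + d b) := by
    intro j b
    have h1 := hl_lip_right (y j) (y b) (y' b)
    have h2 := hl_lip_left (y j) (y' j) (y' b)
    simp only [hL1def, hL2def, Matrix.of_apply]
    calc |l (y j) (y b) - l (y' j) (y' b)|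
        = |(l (y j) (y b) - l (y j) (y' b)) + (l (y j) (y' b) - l (y' j) (y' b))| := by
          ring_nf
      _ ≤ |l (y j) (y b) - l (y j) (y' b)| + |l (y j) (y' b) - l (y' j) (y' b)| :=
          abs_add_le _ _
      _ ≤ lam * |y b - y' b| + lam * |y j - y' j| := add_le_add h1 h2
      _ = lam * (d j + d b) := by simp only [hd]; ring
  -- trace identity
  have htr : ∀ L : Matrix (Fin N) (Fin N) ℝ,
      Matrix.trace (K * H * L * H) = ∑ b, ∑ j, M b j * L j b := by
    intro L
    rw [Matrix.trace_mul_comm, ← Matrix.mul_assoc, ← Matrix.mul_assoc, ← hMdef]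
    simp [Matrix.trace, Matrix.diag, Matrix.mul_apply]
  -- difference formula
  have hdiff : empHSIC k l x (fun i => y i) - empHSIC k l x (fun i => y' i)
      = ((N : ℝ) - 1)⁻¹ ^ 2 * (∑ b, ∑ j, M b j * (L1 j b - L2 j b)) := by
    simp only [empHSIC]
    rw [← hKdef, ← hHdef, ← hL1def, ← hL2def, htr L1, htr L2, ← mul_sub]
    congr 1
    rw [← Finset.sum_sub_distrib]
    refine Finset.sum_congr rfl fun b _ => ?_
    rw [← Finset.sum_sub_distrib]
    refine Finset.sum_congr rfl fun j _ => ?_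
    ring
  -- bound the double sum
  have habs : |∑ b, ∑ j, M b j * (L1 j b - L2 j b)| ≤ 8 * C * lam * N * S := by
    calc |∑ b, ∑ j, M b j * (L1 j b - L2 j b)|
        ≤ ∑ b, |∑ j, M b j * (L1 j b - L2 j b)| := Finset.abs_sum_le_sum_abs _ _
      _ ≤ ∑ b, ∑ j, |M b j * (L1 j b - L2 j b)| :=
          Finset.sum_le_sum fun b _ => Finset.abs_sum_le_sum_abs _ _
      _ ≤ ∑ b, ∑ j, (4 * C) * (lam * (d j + d b)) := by
          refine Finset.sum_le_sum fun b _ => Finset.sum_le_sum fun j _ => ?_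
          rw [abs_mul]
          exact mul_le_mul (hM4 b j) (hΔ j b) (abs_nonneg _) (by linarith)
      _ = (4 * C * lam) * ∑ b, ∑ j, (d j + d b) := by
          rw [Finset.mul_sum]
          refine Finset.sum_congr rfl fun b _ => ?_
          rw [Finset.mul_sum]
          exact Finset.sum_congr rfl fun j _ => by ring
      _ = (4 * C * lam) * (2 * N * S) := by
          congr 1
          have hrow : ∀ b : Fin N, (∑ j, (d j + d b)) = S + (N : ℝ) * d b := by
            intro b
            rw [Finset.sum_add_distrib, Finset.sum_const, Finset.card_univ,
              Fintype.card_fin, nsmul_eq_mul, hS]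
          rw [Finset.sum_congr rfl fun b _ => hrow b, Finset.sum_add_distrib,
            Finset.sum_const, Finset.card_univ, Fintype.card_fin, nsmul_eq_mul,
            ← Finset.mul_sum, ← hS]
          ring
      _ = 8 * C * lam * N * S := by ring
  -- Cauchy–Schwarz : S ≤ √N ⬝ ‖y - y'‖
  have hnorm : ‖y - y'‖ = Real.sqrt (∑ i, d i ^ 2) := by
    rw [EuclideanSpace.norm_eq]
    congr 1
  have hnormnn : 0 ≤ ‖y - y'‖ := norm_nonneg _
  have hSbound : S ≤ Real.sqrt N * ‖y - y'‖ := by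
    have h1 : S ^ 2 ≤ (N : ℝ) * ∑ i, d i ^ 2 := by
      simpa [Finset.card_univ] using sq_sum_le_card_mul_sum_sq (s := Finset.univ) (f := d)
    have h2 : S = Real.sqrt (S ^ 2) := (Real.sqrt_sq hSnn).symm
    rw [h2, hnorm, ← Real.sqrt_mul hNpos.le]
    exact Real.sqrt_le_sqrt h1
  -- assemble
  set s : ℝ := Real.sqrt N with hsdef
  have hs : 0 < s := Real.sqrt_pos.2 hNpos
  have hss : s * s = (N : ℝ) := Real.mul_self_sqrt hNpos.le
  have hcoef : ((N : ℝ) - 1)⁻¹ ^ 2 * (8 * N * s) ≤ 32 / s := by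
    have hne : (0:ℝ) < ((N : ℝ) - 1) ^ 2 := by nlinarith
    rw [inv_pow, inv_mul_le_iff₀ hne,
      show ((N : ℝ) - 1) ^ 2 * (32 / s) = 32 * ((N : ℝ) - 1) ^ 2 / s by ring,
      le_div_iff₀ hs]
    have h8 : 8 * (N : ℝ) * s * s = 8 * (N : ℝ) * (N : ℝ) := by rw [mul_assoc, hss]
    rw [h8]
    nlinarith [sq_nonneg ((N : ℝ) - 2)]
  have hcnn : (0:ℝ) ≤ ((N : ℝ) - 1)⁻¹ ^ 2 := by positivity
  calc |empHSIC k l x (fun i => y i) - empHSIC k l x (fun i => y' i)|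
      = ((N : ℝ) - 1)⁻¹ ^ 2 * |∑ b, ∑ j, M b j * (L1 j b - L2 j b)| := by
        rw [hdiff, abs_mul, abs_of_nonneg hcnn]
    _ ≤ ((N : ℝ) - 1)⁻¹ ^ 2 * (8 * C * lam * N * S) :=
        mul_le_mul_of_nonneg_left habs hcnn
    _ ≤ ((N : ℝ) - 1)⁻¹ ^ 2 * (8 * C * lam * N * (s * ‖y - y'‖)) := by
        refine mul_le_mul_of_nonneg_left ?_ hcnn
        have : (0:ℝ) ≤ 8 * C * lam * N := by positivity
        calc 8 * C * lam * (N : ℝ) * S ≤ 8 * C * lam * N * (Real.sqrt N * ‖y - y'‖) :=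
              mul_le_mul_of_nonneg_left hSbound this
          _ = 8 * C * lam * N * (s * ‖y - y'‖) := by rw [hsdef]
    _ = (((N : ℝ) - 1)⁻¹ ^ 2 * (8 * N * s)) * (C * lam * ‖y - y'‖) := by ring
    _ ≤ (32 / s) * (C * lam * ‖y - y'‖) := by
        refine mul_le_mul_of_nonneg_right hcoef ?_
        positivity
    _ = 32 * lam * C / Real.sqrt N * ‖y - y'‖ := by rw [hsdef]; ring
end

section
/- Let K be a symmetric positive definite N × N real matrix, let σ² > 0, and let y ∈ ℝ^N. Define the negative penalized log-likelihood −log L(f, σ²; y, K) := (N/2) log(2π σ²) + (1/(2σ²)) Σ_{i=1}^N (y_i − f_i)² + (1/2) fᵀ K^{-1} f + (1/2) log |det(I + σ^{-2} K)| for f ∈ ℝ^N. Then the unique minimizer over f is f̂ = K (K + σ² I)^{-1} y, and the minimum value equals −log N(y | 0, K + σ² I) = (N/2) log(2π) + (1/2) log det(K + σ² I) + (1/2) yᵀ (K + σ² I)^{-1} y. -/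
/-!
Completing the square. With `M := σ⁻² I + K⁻¹` (the posterior precision) and
`g := (K + σ² I)⁻¹ y`, so that `y = K g + σ² g` and `f̂ = K g`, one has the identity
`σ⁻² ‖y − f‖² + fᵀ K⁻¹ f = (f − f̂)ᵀ M (f − f̂) + yᵀ (K + σ² I)⁻¹ y`.
Since `M` is positive definite, `f̂` is the unique minimizer; and since
`det (I + σ⁻² K) = σ^{-2N} det (K + σ² I)`, the `log σ²` terms cancel in the minimum value.
-/

open Real Matrix

theorem Matrix.IsSymm.mulVec_dotProduct {n R : Type*} [Fintype n] [CommSemiring R]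
    {K : Matrix n n R} (hK : K.IsSymm) (u v : n → R) :
    (K *ᵥ u) ⬝ᵥ v = u ⬝ᵥ (K *ᵥ v) := by
  rw [dotProduct_comm, dotProduct_mulVec, ← mulVec_transpose, hK.eq, dotProduct_comm]

theorem Matrix.IsSymm.complete_square_gaussian_posterior
    {n 𝕜 : Type*} [Fintype n] [DecidableEq n] [Field 𝕜]
    {K : Matrix n n 𝕜} (hK : K.IsSymm) (hKdet : IsUnit K.det)
    {s : 𝕜} (hs : s ≠ 0) (hAdet : IsUnit (K + s • 1).det) (y f : n → 𝕜) :
    s⁻¹ * ((y - f) ⬝ᵥ (y - f)) + f ⬝ᵥ (K⁻¹ *ᵥ f)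
      = (f - K *ᵥ ((K + s • 1)⁻¹ *ᵥ y))
          ⬝ᵥ ((s⁻¹ • 1 + K⁻¹) *ᵥ (f - K *ᵥ ((K + s • 1)⁻¹ *ᵥ y)))
        + y ⬝ᵥ ((K + s • 1)⁻¹ *ᵥ y) := by
  set g := (K + s • 1)⁻¹ *ᵥ y
  have hy : (K + s • 1) *ᵥ g = y := by rw [mulVec_mulVec, mul_nonsing_inv _ hAdet, one_mulVec]
  rw [add_mulVec, smul_mulVec, one_mulVec] at hy
  have hKK : K⁻¹ *ᵥ (K *ᵥ g) = g := by rw [mulVec_mulVec, nonsing_inv_mul _ hKdet, one_mulVec]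
  have hcross : (K *ᵥ g) ⬝ᵥ (K⁻¹ *ᵥ f) = g ⬝ᵥ f := by
    rw [hK.mulVec_dotProduct, mulVec_mulVec, mul_nonsing_inv _ hKdet, one_mulVec]
  rw [← hy]
  simp only [add_mulVec, mulVec_sub, smul_mulVec, one_mulVec, hKK, dotProduct_add, add_dotProduct,
    dotProduct_sub, sub_dotProduct, dotProduct_smul, smul_dotProduct, smul_eq_mul, hcross]
  rw [dotProduct_comm (K *ᵥ g) f, dotProduct_comm g f, dotProduct_comm g (K *ᵥ g)]
  field_simp
  ring

theorem log_abs_det_one_add_inv_smul {n : Type*} [Fintype n] [DecidableEq n]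
    (K : Matrix n n ℝ) {s : ℝ} (hs : s ≠ 0) (hA : (K + s • 1).det ≠ 0) :
    Real.log |(1 + s⁻¹ • K).det|
      = Real.log |(K + s • 1).det| - Fintype.card n * Real.log s := by
  have : 1 + s⁻¹ • K = s⁻¹ • (K + s • 1) := by
    rw [smul_add, smul_smul, inv_mul_cancel₀ hs, one_smul, add_comm]
  rw [this, det_smul, abs_mul, Real.log_mul (by positivity) (abs_ne_zero.2 hA), abs_pow,
    Real.log_pow, Real.log_abs, Real.log_inv]
  ring

/-- **GP regression as penalized maximum likelihood.**
Let `K` be a symmetric positive definite `N × N` real matrix, `σ² > 0`, `y ∈ ℝ^N`. Define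
the negative penalized log-likelihood
`L f := (N/2)·log(2π σ²) + (1/(2σ²)) Σᵢ (yᵢ − fᵢ)² + (1/2) fᵀ K⁻¹ f + (1/2) log |det(I + σ⁻² K)|`.
Then the unique minimizer over `f` is `f̂ = K (K + σ² I)⁻¹ y`, and the minimum value equals
`−log N(y | 0, K + σ² I) = (N/2) log(2π) + (1/2) log det(K + σ² I) + (1/2) yᵀ (K + σ² I)⁻¹ y`. -/
theorem gp_penalized_likelihood_minimizer
    (N : ℕ) (K : Matrix (Fin N) (Fin N) ℝ) (hKsymm : K.IsSymm) (hKpos : K.PosDef)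
    (σ2 : ℝ) (hσ2 : 0 < σ2) (y : Fin N → ℝ)
    (L : (Fin N → ℝ) → ℝ)
    (hL : L = fun f => (N / 2 : ℝ) * Real.log (2 * π * σ2)
        + (1 / (2 * σ2)) * ∑ i, (y i - f i) ^ 2
        + (1 / 2) * (f ⬝ᵥ (K⁻¹ *ᵥ f))
        + (1 / 2) * Real.log |((1 : Matrix (Fin N) (Fin N) ℝ) + σ2⁻¹ • K).det|)
    (fhat : Fin N → ℝ)
    (hfhat : fhat = K *ᵥ ((K + σ2 • (1 : Matrix (Fin N) (Fin N) ℝ))⁻¹ *ᵥ y)) :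
    (∀ f : Fin N → ℝ, f ≠ fhat → L fhat < L f) ∧
      L fhat = (N / 2 : ℝ) * Real.log (2 * π)
        + (1 / 2) * Real.log ((K + σ2 • (1 : Matrix (Fin N) (Fin N) ℝ)).det)
        + (1 / 2) * (y ⬝ᵥ ((K + σ2 • (1 : Matrix (Fin N) (Fin N) ℝ))⁻¹ *ᵥ y)) := by
  set A : Matrix (Fin N) (Fin N) ℝ := K + σ2 • 1
  set M : Matrix (Fin N) (Fin N) ℝ := σ2⁻¹ • 1 + K⁻¹
  have hA : A.PosDef := hKpos.add_posSemidef (PosDef.one.smul hσ2).posSemidef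
  have hM : M.PosDef := (PosDef.one.smul (inv_pos.2 hσ2)).add hKpos.inv
  have hL_eq : ∀ f, L f = (N / 2 : ℝ) * Real.log (2 * π) + (1 / 2) * Real.log A.det
      + (1 / 2) * (y ⬝ᵥ (A⁻¹ *ᵥ y)) + (1 / 2) * ((f - fhat) ⬝ᵥ (M *ᵥ (f - fhat))) := by
    intro f
    have hquad := hKsymm.complete_square_gaussian_posterior (isUnit_iff_ne_zero.2 hKpos.det_pos.ne')
      hσ2.ne' (isUnit_iff_ne_zero.2 hA.det_pos.ne') y f
    rw [← hfhat] at hquad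
    have hsum : ∑ i, (y i - f i) ^ 2 = (y - f) ⬝ᵥ (y - f) := by simp [dotProduct, sq]
    simp only [hL]
    rw [hsum, Real.log_mul (by positivity) hσ2.ne',
      log_abs_det_one_add_inv_smul K hσ2.ne' hA.det_pos.ne', abs_of_pos hA.det_pos,
      Fintype.card_fin]
    linear_combination (1 / 2) * hquad
  refine ⟨fun f hf => ?_, by simpa using hL_eq fhat⟩
  have hpos : 0 < (f - fhat) ⬝ᵥ (M *ᵥ (f - fhat)) := by
    simpa using hM.dotProduct_mulVec_pos (sub_ne_zero.2 hf)
  rw [hL_eq f, hL_eq fhat, sub_self, mulVec_zero, dotProduct_zero]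
  linarith
end

section
/- Let f : [0,1] → [0,1] be a strictly monotonically increasing differentiable bijection with differentiable inverse f^{-1}, let X be a random variable on [0,1] with density p_X, and let Y := f(X) with density p_Y. If the independence condition ∫₀¹ log f'(x) p_X(x) dx = ∫₀¹ log f'(x) dx holds, then ∫₀¹ log (f^{-1})'(y) p_Y(y) dy ≥ ∫₀¹ log (f^{-1})'(y) dy, with equality if and only if f' is constant. -/
/-!
Substituting `y = f x` turns `∫ log (f⁻¹)' · p_Y` into `-∫ log f' · p_X` and `∫ log (f⁻¹)'` into
`-∫ f' log f'`. By the independence hypothesis the first equals `-∫ log f'`, so the gap between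
the two sides is `∫ (f' - 1) log f'`, whose integrand is nonnegative and vanishes exactly where
`f' = 1`. So the gap vanishes iff `f' = 1` almost everywhere; by the fundamental theorem of
calculus this forces `f = id` on `[0, 1]`, and conversely a constant `f'` must be `1` by the mean
value theorem, since `f 0 = 0` and `f 1 = 1`.
-/

open MeasureTheory Set Real

theorem HasDerivAt.eq_of_eqOn_Icc {f g : ℝ → ℝ} {f' g' a b x : ℝ} (hab : a < b)
    (hx : x ∈ Icc a b) (hfg : EqOn f g (Icc a b)) (hf : HasDerivAt f f' x)
    (hg : HasDerivAt g g' x) : f' = g' :=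
  (uniqueDiffOn_Icc hab x hx).eq_deriv _ hf.hasDerivWithinAt
    (hg.hasDerivWithinAt.congr_of_mem hfg hx)

theorem HasDerivAt.mul_eq_one_of_leftInvOn {f g : ℝ → ℝ} {f' g' a b x : ℝ}
    (hg : HasDerivAt g g' (f x)) (hf : HasDerivAt f f' x) (hab : a < b) (hx : x ∈ Icc a b)
    (hinv : LeftInvOn g f (Icc a b)) : g' * f' = 1 :=
  (hg.comp x hf).eq_of_eqOn_Icc hab hx hinv.eqOn (hasDerivAt_id x)

theorem MonotoneOn.eq_of_image_Icc_eq {f : ℝ → ℝ} {a b c d : ℝ} (hmono : MonotoneOn f (Icc a b))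
    (hab : a ≤ b) (hcont : ContinuousOn f (Icc a b)) (himg : f '' Icc a b = Icc c d) :
    f a = c ∧ f b = d := by
  rwa [hcont.image_Icc_of_monotoneOn hab hmono,
    Icc_eq_Icc_iff (hmono (left_mem_Icc.2 hab) (right_mem_Icc.2 hab) hab)] at himg

theorem sub_one_mul_log_nonneg {x : ℝ} (hx : 0 < x) : 0 ≤ (x - 1) * log x := by
  rcases le_total 1 x with h | h
  · exact mul_nonneg (sub_nonneg.2 h) (log_nonneg h)
  · exact mul_nonneg_of_nonpos_of_nonpos (sub_nonpos.2 h) (log_nonpos hx.le h)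

theorem sub_one_mul_log_eq_zero_iff {x : ℝ} (hx : 0 < x) : (x - 1) * log x = 0 ↔ x = 1 := by
  rw [mul_eq_zero, sub_eq_zero, log_eq_zero]
  constructor
  · rintro (h | h | h | h) <;> first | exact h | linarith
  · exact Or.inl

section

variable {f f' : ℝ → ℝ} {a b : ℝ}

theorem eq_const_of_hasDerivAt_of_ae_eq_const {c : ℝ} (hab : a < b)
    (hf : ∀ x ∈ Icc a b, HasDerivAt f (f' x) x) (hc : ∀ᵐ x ∂volume.restrict (Ioc a b), f' x = c) :
    ∀ x ∈ Icc a b, f' x = c := by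
  have haffine : EqOn f (fun x => f a + c * (x - a)) (Icc a b) := by
    intro x hx
    have hcx : f' =ᵐ[volume.restrict (uIoc a x)] fun _ => c := by
      rw [uIoc_of_le hx.1]
      exact ae_restrict_of_ae_restrict_of_subset (Ioc_subset_Ioc_right hx.2) hc
    have hftc := intervalIntegral.integral_eq_sub_of_hasDerivAt
      (fun t ht => hf t (Icc_subset_Icc_right hx.2 (uIcc_of_le hx.1 ▸ ht)))
      (intervalIntegrable_const.congr_ae hcx.symm)
    rw [intervalIntegral.integral_congr_ae_restrict hcx, intervalIntegral.integral_const,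
      smul_eq_mul] at hftc
    linarith
  intro x hx
  refine (hf x hx).eq_of_eqOn_Icc hab hx haffine ?_
  simpa using ((hasDerivAt_id x).sub_const a).const_mul c |>.const_add (f a)

theorem integral_comp_mul_deriv_of_deriv_nonneg_Icc (hab : a ≤ b)
    (hf : ∀ x ∈ Icc a b, HasDerivAt f (f' x) x) (hf' : ∀ x ∈ Icc a b, 0 ≤ f' x) (g : ℝ → ℝ) :
    ∫ x in a..b, g (f x) * f' x = ∫ y in f a..f b, g y := by
  rw [← intervalIntegral.integral_comp_mul_deriv_of_deriv_nonneg (g := g)]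
  · rfl
  · rw [uIcc_of_le hab]; exact fun x hx => (hf x hx).continuousAt.continuousWithinAt
  all_goals rw [min_eq_left hab, max_eq_right hab]
  · exact fun x hx => hf x (Ioo_subset_Icc_self hx)
  · exact fun x hx => hf' x (Ioo_subset_Icc_self hx)

theorem intervalIntegrable_comp_mul_deriv_iff_of_deriv_nonneg_Icc (hab : a ≤ b)
    (hf : ∀ x ∈ Icc a b, HasDerivAt f (f' x) x) (hf' : ∀ x ∈ Icc a b, 0 ≤ f' x) (g : ℝ → ℝ) :
    IntervalIntegrable (fun x => g (f x) * f' x) volume a b ↔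
      IntervalIntegrable g volume (f a) (f b) := by
  rw [← intervalIntegral.integrable_comp_mul_deriv_iff_of_deriv_nonneg (g := g)]
  · rfl
  · rw [uIcc_of_le hab]; exact fun x hx => (hf x hx).continuousAt.continuousWithinAt
  all_goals rw [min_eq_left hab, max_eq_right hab]
  · exact fun x hx => hf x (Ioo_subset_Icc_self hx)
  · exact fun x hx => hf' x (Ioo_subset_Icc_self hx)

theorem integral_log_invDeriv_mul_density {finv finv' pX pY : ℝ → ℝ} (hab : a ≤ b)
    (hf : ∀ x ∈ Icc a b, HasDerivAt f (f' x) x) (hpos : ∀ x ∈ Icc a b, 0 < f' x)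
    (hinv : ∀ x ∈ Icc a b, finv (f x) = x) (hinv' : ∀ x ∈ Icc a b, finv' (f x) = (f' x)⁻¹)
    (hpY : ∀ x ∈ Icc a b, pY (f x) = pX (finv (f x)) * finv' (f x)) :
    ∫ y in f a..f b, log (finv' y) * pY y = -∫ x in a..b, log (f' x) * pX x := by
  rw [← integral_comp_mul_deriv_of_deriv_nonneg_Icc hab hf (fun x hx => (hpos x hx).le),
    ← intervalIntegral.integral_neg]
  refine intervalIntegral.integral_congr fun x hx => ?_
  rw [uIcc_of_le hab] at hx
  have := (hpos x hx).ne'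
  simp only [hpY x hx, hinv x hx, hinv' x hx, log_inv]
  field_simp

theorem integral_log_invDeriv {finv' : ℝ → ℝ} (hab : a ≤ b)
    (hf : ∀ x ∈ Icc a b, HasDerivAt f (f' x) x) (hpos : ∀ x ∈ Icc a b, 0 < f' x)
    (hinv' : ∀ x ∈ Icc a b, finv' (f x) = (f' x)⁻¹) :
    ∫ y in f a..f b, log (finv' y) = -∫ x in a..b, f' x * log (f' x) := by
  rw [← integral_comp_mul_deriv_of_deriv_nonneg_Icc hab hf (fun x hx => (hpos x hx).le),
    ← intervalIntegral.integral_neg]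
  refine intervalIntegral.integral_congr fun x hx => ?_
  rw [uIcc_of_le hab] at hx
  simp only [hinv' x hx, log_inv]
  ring

theorem intervalIntegrable_log_invDeriv_iff {finv' : ℝ → ℝ} (hab : a ≤ b)
    (hf : ∀ x ∈ Icc a b, HasDerivAt f (f' x) x) (hpos : ∀ x ∈ Icc a b, 0 < f' x)
    (hinv' : ∀ x ∈ Icc a b, finv' (f x) = (f' x)⁻¹) :
    IntervalIntegrable (fun y => log (finv' y)) volume (f a) (f b) ↔
      IntervalIntegrable (fun x => f' x * log (f' x)) volume a b := by
  rw [← intervalIntegrable_comp_mul_deriv_iff_of_deriv_nonneg_Icc hab hf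
    (fun x hx => (hpos x hx).le), intervalIntegrable_congr (g := fun x => -(f' x * log (f' x)))]
  · exact ⟨fun h => by simpa only [Pi.neg_def, neg_neg] using h.neg, fun h => h.neg⟩
  · intro x hx
    rw [uIoc_of_le hab] at hx
    simp only [hinv' x (Ioc_subset_Icc_self hx), log_inv]
    ring

theorem integral_sub_one_mul_log_deriv_eq_zero_iff (hab : a < b)
    (hf : ∀ x ∈ Icc a b, HasDerivAt f (f' x) x) (hpos : ∀ x ∈ Icc a b, 0 < f' x)
    (hslope : f b - f a = b - a)
    (hint : IntervalIntegrable (fun x => (f' x - 1) * log (f' x)) volume a b) :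
    ∫ x in a..b, (f' x - 1) * log (f' x) = 0 ↔ ∃ c, ∀ x ∈ Icc a b, f' x = c := by
  have hpos' : ∀ᵐ x ∂volume.restrict (Ioc a b), 0 < f' x :=
    ae_restrict_of_forall_mem measurableSet_Ioc fun x hx => hpos x (Ioc_subset_Icc_self hx)
  rw [intervalIntegral.integral_eq_zero_iff_of_le_of_nonneg_ae hab.le
    (hpos'.mono fun x hx => sub_one_mul_log_nonneg hx) hint]
  constructor
  · intro h
    refine ⟨1, eq_const_of_hasDerivAt_of_ae_eq_const hab hf ?_⟩
    filter_upwards [h, hpos'] with x hx hxpos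
    exact (sub_one_mul_log_eq_zero_iff hxpos).1 hx
  · rintro ⟨c, hc⟩
    obtain ⟨ξ, hξ, hξslope⟩ := exists_hasDerivAt_eq_slope f f' hab
      (fun x hx => (hf x hx).continuousAt.continuousWithinAt)
      (fun x hx => hf x (Ioo_subset_Icc_self hx))
    have hc1 : c = 1 := by
      rw [← hc ξ (Ioo_subset_Icc_self hξ), hξslope, hslope, div_self (sub_ne_zero.2 hab.ne')]
    refine ae_restrict_of_forall_mem measurableSet_Ioc fun x hx => ?_
    simp [hc x (Ioc_subset_Icc_self hx), hc1]

end

theorem igci_reverse_direction_correlation_general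
    (f f' finv finv' pX pY : ℝ → ℝ)
    (hmono : StrictMonoOn f (Icc 0 1))
    (hbij : Set.BijOn f (Icc 0 1) (Icc 0 1))
    (hinv_left : ∀ x ∈ Icc (0:ℝ) 1, finv (f x) = x)
    (hderiv : ∀ x ∈ Icc (0:ℝ) 1, HasDerivAt f (f' x) x)
    (hderivinv : ∀ y ∈ Icc (0:ℝ) 1, HasDerivAt finv (finv' y) y)
    (hpY : ∀ y ∈ Icc (0:ℝ) 1, pY y = pX (finv y) * finv' y)
    (hint2 : IntervalIntegrable (fun x => Real.log (f' x)) volume 0 1)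
    (hint4 : IntervalIntegrable (fun y => Real.log (finv' y)) volume 0 1)
    (hindep : (∫ x in (0:ℝ)..1, Real.log (f' x) * pX x) = ∫ x in (0:ℝ)..1, Real.log (f' x)) :
    (∫ y in (0:ℝ)..1, Real.log (finv' y) * pY y) ≥ (∫ y in (0:ℝ)..1, Real.log (finv' y)) ∧
      ((∫ y in (0:ℝ)..1, Real.log (finv' y) * pY y) = (∫ y in (0:ℝ)..1, Real.log (finv' y)) ↔
        ∃ c : ℝ, ∀ x ∈ Icc (0:ℝ) 1, f' x = c) := by
  have hinv_mul : ∀ x ∈ Icc (0:ℝ) 1, finv' (f x) * f' x = 1 := fun x hx =>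
    (hderivinv _ (hbij.mapsTo hx)).mul_eq_one_of_leftInvOn (hderiv x hx) one_pos hx hinv_left
  have hpos : ∀ x ∈ Icc (0:ℝ) 1, 0 < f' x := fun x hx =>
    ((hderiv x hx).hasDerivWithinAt.nonneg_of_monotoneOn (uniqueDiffOn_Icc one_pos x hx).accPt
      hmono.monotoneOn).lt_of_ne (by rintro h; simpa [← h] using hinv_mul x hx)
  have hinv' : ∀ x ∈ Icc (0:ℝ) 1, finv' (f x) = (f' x)⁻¹ := fun x hx =>
    eq_inv_of_mul_eq_one_left (hinv_mul x hx)
  obtain ⟨hf0, hf1⟩ := hmono.monotoneOn.eq_of_image_Icc_eq zero_le_one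
    (fun x hx => (hderiv x hx).continuousAt.continuousWithinAt) hbij.image_eq
  have hY := integral_log_invDeriv_mul_density zero_le_one hderiv hpos hinv_left hinv'
    fun x hx => hpY _ (hbij.mapsTo hx)
  have hU := integral_log_invDeriv zero_le_one hderiv hpos hinv'
  have hUint := (intervalIntegrable_log_invDeriv_iff zero_le_one hderiv hpos hinv').1
    (by rwa [hf0, hf1])
  rw [hf0, hf1] at hY hU
  have hgap : ∫ x in (0:ℝ)..1, (f' x - 1) * log (f' x) =
      (∫ x in (0:ℝ)..1, f' x * log (f' x)) - ∫ x in (0:ℝ)..1, log (f' x) := by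
    rw [← intervalIntegral.integral_sub hUint hint2]
    simp only [sub_mul, one_mul]
  have hDint : IntervalIntegrable (fun x => (f' x - 1) * log (f' x)) volume 0 1 := by
    simpa only [sub_mul, one_mul] using hUint.sub hint2
  rw [hY, hU, hindep, ge_iff_le, ← sub_nonneg, ← sub_eq_zero, neg_sub_neg, ← hgap,
    integral_sub_one_mul_log_deriv_eq_zero_iff one_pos hderiv hpos (by rw [hf0, hf1]) hDint]
  exact ⟨intervalIntegral.integral_nonneg zero_le_one fun x hx => sub_one_mul_log_nonneg
    (hpos x hx), Iff.rfl⟩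

/-- **IGCI: independence in one direction implies positive correlation in the other.**
Let `f : [0,1] → [0,1]` be a strictly monotonically increasing differentiable bijection with
differentiable inverse, `X` a random variable on `[0,1]` with density `p_X`, and `Y := f(X)`
with density `p_Y`. If `∫₀¹ log f'(x) p_X(x) dx = ∫₀¹ log f'(x) dx`, then
`∫₀¹ log (f⁻¹)'(y) p_Y(y) dy ≥ ∫₀¹ log (f⁻¹)'(y) dy`, with equality iff `f'` is constant. -/
theorem igci_reverse_direction_correlation
    (f f' finv finv' pX pY : ℝ → ℝ)
    (hmono : StrictMonoOn f (Icc 0 1))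
    (hbij : Set.BijOn f (Icc 0 1) (Icc 0 1))
    (hinv_left : ∀ x ∈ Icc (0:ℝ) 1, finv (f x) = x)
    (hinv_right : ∀ y ∈ Icc (0:ℝ) 1, f (finv y) = y)
    (hderiv : ∀ x ∈ Icc (0:ℝ) 1, HasDerivAt f (f' x) x)
    (hderivinv : ∀ y ∈ Icc (0:ℝ) 1, HasDerivAt finv (finv' y) y)
    (hpX_nonneg : ∀ x, 0 ≤ pX x)
    (hpX_prob : (∫ x in (0:ℝ)..1, pX x) = 1)
    (hpY : ∀ y ∈ Icc (0:ℝ) 1, pY y = pX (finv y) * finv' y)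
    (hint1 : IntervalIntegrable (fun x => Real.log (f' x) * pX x) volume 0 1)
    (hint2 : IntervalIntegrable (fun x => Real.log (f' x)) volume 0 1)
    (hint3 : IntervalIntegrable (fun y => Real.log (finv' y) * pY y) volume 0 1)
    (hint4 : IntervalIntegrable (fun y => Real.log (finv' y)) volume 0 1)
    (hindep : (∫ x in (0:ℝ)..1, Real.log (f' x) * pX x) = ∫ x in (0:ℝ)..1, Real.log (f' x)) :
    (∫ y in (0:ℝ)..1, Real.log (finv' y) * pY y) ≥ (∫ y in (0:ℝ)..1, Real.log (finv' y)) ∧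
      ((∫ y in (0:ℝ)..1, Real.log (finv' y) * pY y) = (∫ y in (0:ℝ)..1, Real.log (finv' y)) ↔
        ∃ c : ℝ, ∀ x ∈ Icc (0:ℝ) 1, f' x = c) :=
  igci_reverse_direction_correlation_general f f' finv finv' pX pY hmono hbij hinv_left hderiv
    hderivinv hpY hint2 hint4 hindep
end
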